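/- Any two patterns p1 and p2 have a least upper bound (anti-unifier) p1 ⊔ p2 with respect to the generality order ⊑: a pattern matching both p1 and p2 that is matched by every other pattern matching both; moreover this join is unique up to variable renaming. -/

import Mathlib

/-- Patterns: terms over constructors from `S` that may contain variables from `V`. -/
inductive Pat (S V : Type) : Type where
  | var : V → Pat S V
  | con : S → List (Pat S V) → Pat S V

namespace Pat

variable {S V : Type}

/-- Applying a substitution (a total map from variables to patterns) structurally. -/
def subst (σ : V → Pat S V) : Pat S V → Pat S V
  | .var x => σ x
  | .con s args => .con s (args.attach.map (fun a => subst σ a.1))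
  decreasing_by
  all_goals simp_wf
  all_goals (try have h := List.sizeOf_lt_of_mem a.2)
  all_goals omega

/-- Generality order: `p' ⊑ p` iff `p'` is an instance of `p`. -/
def le (p' p : Pat S V) : Prop := ∃ σ : V → Pat S V, p' = p.subst σ

/-- Equivalence up to variable renaming. -/
def equiv (p q : Pat S V) : Prop := le p q ∧ le q p

end Pat

/-!
Anti-unify `p₁` and `p₂` by simultaneous recursion, sending each mismatched pair `(a, b)` of
subterms to the variable `name (a, b)`, where `name` is injective on the finitely many pairs of
subterms (possible since `V` is infinite). Injectivity lets one read `a` and `b` back off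
`name (a, b)`, so the result generalizes both patterns. If `q` generalizes both, via `σ₁` and
`σ₂`, then recursion along `q` shows the anti-unifier is `q` instantiated with
`v ↦ antiUnify name (σ₁ v) (σ₂ v)`. Two least generalizations generalize each other.
-/

theorem List.exists_injOn_mem {α β : Type*} [Infinite β] (l : List α) :
    ∃ f : α → β, Set.InjOn f {x | x ∈ l} := by
  classical
  exact ⟨fun x => Infinite.natEmbedding β (l.idxOf x),
    fun _ hx _ _ h => (List.idxOf_inj hx).1 ((Infinite.natEmbedding β).injective h)⟩

namespace Pat

variable {S V : Type}

theorem subst_var (σ : V → Pat S V) (x : V) : subst σ (.var x) = σ x := by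
  rw [subst]

theorem subst_con (σ : V → Pat S V) (s : S) (args : List (Pat S V)) :
    subst σ (.con s args) = .con s (args.map (subst σ)) := by
  rw [subst]
  simp

@[elab_as_elim]
theorem induction_on {motive : Pat S V → Prop} (p : Pat S V) (var : ∀ x, motive (.var x))
    (con : ∀ s args, (∀ a ∈ args, motive a) → motive (.con s args)) : motive p :=
  match p with
  | .var x => var x
  | .con s args => con s args fun a _ => induction_on a var con
  decreasing_by
    simp_wf
    have := List.sizeOf_lt_of_mem ‹a ∈ args›
    omega

def subterms : Pat S V → List (Pat S V)
  | .var x => [.var x]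
  | .con s args => .con s args :: args.attach.flatMap fun a => subterms a.1
  decreasing_by
    simp_wf
    have := List.sizeOf_lt_of_mem a.2
    omega

theorem mem_subterms_self (p : Pat S V) : p ∈ subterms p := by
  cases p <;> simp [subterms]

theorem subterms_subset_of_mem {s : S} {args : List (Pat S V)} {a : Pat S V}
    (ha : a ∈ args) : subterms a ⊆ subterms (.con s args) := by
  intro q hq
  rw [subterms]
  exact List.mem_cons_of_mem _ (List.mem_flatMap.2 ⟨⟨a, ha⟩, List.mem_attach _ _, hq⟩)

open Classical in
noncomputable def antiUnify (name : Pat S V × Pat S V → V) : Pat S V → Pat S V → Pat S V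
  | .con s as, .con t bs =>
      if s = t ∧ as.length = bs.length then
        .con s ((as.zip bs).attach.map fun x => antiUnify name x.1.1 x.1.2)
      else .var (name (.con s as, .con t bs))
  | a, b => .var (name (a, b))
  termination_by a => sizeOf a
  decreasing_by
    obtain ⟨⟨a', b'⟩, hx⟩ := x
    have := List.sizeOf_lt_of_mem (List.of_mem_zip hx).1
    simp_wf
    omega

open Classical in
theorem antiUnify_con_con (name : Pat S V × Pat S V → V) (s t : S) (as bs : List (Pat S V)) :
    antiUnify name (.con s as) (.con t bs) =
      if s = t ∧ as.length = bs.length then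
        .con s ((as.zip bs).map fun x => antiUnify name x.1 x.2)
      else .var (name (.con s as, .con t bs)) := by
  rw [antiUnify]
  simp [List.attach_map_val (f := fun x : Pat S V × Pat S V => antiUnify name x.1 x.2)]

theorem antiUnify_var_left (name : Pat S V × Pat S V → V) (x : V) (b : Pat S V) :
    antiUnify name (.var x) b = .var (name (.var x, b)) := by
  cases b <;> rw [antiUnify.eq_def]

theorem antiUnify_var_right (name : Pat S V × Pat S V → V) (a : Pat S V) (y : V) :
    antiUnify name a (.var y) = .var (name (a, .var y)) := by
  cases a <;> rw [antiUnify.eq_def]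

theorem antiUnify_swap (name : Pat S V × Pat S V → V) (a b : Pat S V) :
    antiUnify name a b = antiUnify (name ∘ Prod.swap) b a := by
  induction a using induction_on generalizing b with
  | var x => rw [antiUnify_var_left, antiUnify_var_right]; rfl
  | con s as ih =>
    cases b with
    | var y => rw [antiUnify_var_left, antiUnify_var_right]; rfl
    | con t bs =>
      rw [antiUnify_con_con, antiUnify_con_con]
      by_cases h : s = t ∧ as.length = bs.length
      · obtain ⟨rfl, hlen⟩ := h
        rw [if_pos ⟨rfl, hlen⟩, if_pos ⟨rfl, hlen.symm⟩, ← List.zip_swap as bs, List.map_map]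
        refine congrArg _ (List.map_congr_left fun x hx => ?_)
        exact ih x.1 (List.of_mem_zip hx).1 x.2
      · rw [if_neg h, if_neg fun h' => h ⟨h'.1.symm, h'.2.symm⟩]
        rfl

theorem subst_antiUnify_eq_left (name : Pat S V × Pat S V → V) (σ : V → Pat S V)
    (p₁ p₂ : Pat S V) (hσ : ∀ a ∈ subterms p₁, ∀ b ∈ subterms p₂, σ (name (a, b)) = a) :
    subst σ (antiUnify name p₁ p₂) = p₁ := by
  induction p₁ using induction_on generalizing p₂ with
  | var x =>
    rw [antiUnify_var_left, subst_var, hσ _ (mem_subterms_self _) _ (mem_subterms_self _)]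
  | con s as ih =>
    have hself := hσ _ (mem_subterms_self _) _ (mem_subterms_self _)
    cases p₂ with
    | var y => rw [antiUnify_var_right, subst_var, hself]
    | con t bs =>
      rw [antiUnify_con_con]
      by_cases h : s = t ∧ as.length = bs.length
      · rw [if_pos h, subst_con, List.map_map]
        refine congrArg _ ((List.map_congr_left fun x hx => ?_).trans (List.map_fst_zip h.2.le))
        have ha := (List.of_mem_zip hx).1
        have hb := (List.of_mem_zip hx).2
        exact ih x.1 ha x.2 fun a ha' b hb' =>
          hσ a (subterms_subset_of_mem ha ha') b (subterms_subset_of_mem hb hb')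
      · rw [if_neg h, subst_var, hself]

theorem antiUnify_subst (name : Pat S V × Pat S V → V) (σ₁ σ₂ : V → Pat S V) (q : Pat S V) :
    antiUnify name (subst σ₁ q) (subst σ₂ q) =
      subst (fun v => antiUnify name (σ₁ v) (σ₂ v)) q := by
  induction q using induction_on with
  | var x => simp only [subst_var]
  | con s args ih =>
    rw [subst_con, subst_con, subst_con, antiUnify_con_con, if_pos ⟨rfl, by simp⟩,
      List.zip_map', List.map_map]
    exact congrArg _ (List.map_congr_left ih)

theorem le_antiUnify_left {name : Pat S V × Pat S V → V} {p₁ p₂ : Pat S V}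
    (hname : Set.InjOn name {x | x.1 ∈ subterms p₁ ∧ x.2 ∈ subterms p₂}) :
    le p₁ (antiUnify name p₁ p₂) := by
  have : Nonempty (Pat S V × Pat S V) := ⟨(p₁, p₂)⟩
  refine ⟨fun v => (Function.invFunOn name {x | x.1 ∈ subterms p₁ ∧ x.2 ∈ subterms p₂} v).1,
    (subst_antiUnify_eq_left name _ p₁ p₂ fun a ha b hb => ?_).symm⟩
  exact congrArg Prod.fst (hname.leftInvOn_invFunOn ⟨ha, hb⟩)

theorem le_antiUnify_right {name : Pat S V × Pat S V → V} {p₁ p₂ : Pat S V}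
    (hname : Set.InjOn name {x | x.1 ∈ subterms p₁ ∧ x.2 ∈ subterms p₂}) :
    le p₂ (antiUnify name p₁ p₂) := by
  rw [antiUnify_swap]
  exact le_antiUnify_left fun x hx y hy h =>
    Prod.swap_injective (hname ⟨hx.2, hx.1⟩ ⟨hy.2, hy.1⟩ h)

theorem antiUnify_le (name : Pat S V × Pat S V → V) {p₁ p₂ q : Pat S V}
    (h₁ : le p₁ q) (h₂ : le p₂ q) : le (antiUnify name p₁ p₂) q := by
  obtain ⟨σ₁, rfl⟩ := h₁
  obtain ⟨σ₂, rfl⟩ := h₂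
  exact ⟨_, antiUnify_subst name σ₁ σ₂ q⟩

end Pat

/-- Any two patterns `p₁`, `p₂` (over an infinite supply of variables) have an
anti-unifier `j`: a pattern matching both that is matched by every other pattern
matching both; moreover `j` is unique up to variable renaming. -/
theorem pattern_anti_unifier_exists_unique
    {S V : Type} [Infinite V] (p₁ p₂ : Pat S V) :
    ∃ j : Pat S V,
      (Pat.le p₁ j ∧ Pat.le p₂ j ∧
        ∀ q : Pat S V, Pat.le p₁ q → Pat.le p₂ q → Pat.le j q) ∧
      (∀ j' : Pat S V,
        (Pat.le p₁ j' ∧ Pat.le p₂ j' ∧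
          ∀ q : Pat S V, Pat.le p₁ q → Pat.le p₂ q → Pat.le j' q) →
        Pat.equiv j j') := by
  obtain ⟨name, hname⟩ := ((Pat.subterms p₁).product (Pat.subterms p₂)).exists_injOn_mem (β := V)
  replace hname := hname.mono fun x hx => List.pair_mem_product.2 hx
  have hle₁ := Pat.le_antiUnify_left hname
  have hle₂ := Pat.le_antiUnify_right hname
  refine ⟨_, ⟨hle₁, hle₂, fun q => Pat.antiUnify_le name⟩, ?_⟩
  rintro j' ⟨hj₁, hj₂, hj'⟩
  exact ⟨Pat.antiUnify_le name hj₁ hj₂, hj' _ hle₁ hle₂⟩
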